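/- arXiv:2506.17625 — 7 statements merged into one kernel-verified Lean document; each statement's English description precedes it below -/
import Mathlib

section
/- Let F be a field and let f₁, f₂ ∈ F[X] be two distinct polynomials, each of degree at most d. Then the set of elements λ ∈ F such that f₁(λ) = f₂(λ) and f₁'(λ) = f₂'(λ) is finite and has cardinality at most ⌊d/2⌋. -/
/-!
With `g = f₁ - f₂ ≠ 0`, the points in question are exactly the roots of `g` of multiplicity at
least two. Each of them uses up two of the at most `deg g ≤ d` roots of `g` counted with
multiplicity, so there are at most `⌊d / 2⌋` of them.
-/

open Polynomial

theorem Multiset.two_mul_card_filter_one_lt_count_le {α : Type*} [DecidableEq α]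
    (s : Multiset α) : 2 * (s.toFinset.filter fun x => 1 < s.count x).card ≤ card s := by
  set T := s.toFinset.filter fun x => 1 < s.count x
  calc 2 * T.card = ∑ _x ∈ T, 2 := by rw [Finset.sum_const, smul_eq_mul, mul_comm]
    _ ≤ ∑ x ∈ T, s.count x := Finset.sum_le_sum fun x hx => (Finset.mem_filter.1 hx).2
    _ ≤ ∑ x ∈ s.toFinset, s.count x := Finset.sum_le_sum_of_subset (Finset.filter_subset _ _)
    _ = card s := Multiset.toFinset_sum_count_eq s

namespace Polynomial

variable {R : Type*} [CommRing R] [IsDomain R]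

theorem setOf_isRoot_and_isRoot_derivative_eq [DecidableEq R] {p : R[X]} (hp : p ≠ 0) :
    {x | p.IsRoot x ∧ (derivative p).IsRoot x} =
      ↑(p.roots.toFinset.filter fun x => 1 < p.roots.count x) := by
  ext x
  simp only [Set.mem_ofPred_eq, Finset.coe_filter, Multiset.mem_toFinset, mem_roots hp,
    count_roots, ← one_lt_rootMultiplicity_iff_isRoot hp]
  exact ⟨fun h => ⟨(rootMultiplicity_pos hp).1 (by omega), h⟩, And.right⟩

theorem finite_setOf_isRoot_and_isRoot_derivative {p : R[X]} (hp : p ≠ 0) :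
    {x | p.IsRoot x ∧ (derivative p).IsRoot x}.Finite := by
  classical
  rw [setOf_isRoot_and_isRoot_derivative_eq hp]
  exact Finset.finite_toSet _

theorem two_mul_ncard_setOf_isRoot_and_isRoot_derivative_le {p : R[X]} (hp : p ≠ 0) :
    2 * {x | p.IsRoot x ∧ (derivative p).IsRoot x}.ncard ≤ p.natDegree := by
  classical
  rw [setOf_isRoot_and_isRoot_derivative_eq hp, Set.ncard_coe_finset]
  exact (p.roots.two_mul_card_filter_one_lt_count_le).trans (card_roots' p)

end Polynomial

theorem stmt_0 {F : Type*} [Field F] (d : ℕ) (f₁ f₂ : F[X])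
    (hne : f₁ ≠ f₂) (hd₁ : f₁.degree ≤ (d : WithBot ℕ)) (hd₂ : f₂.degree ≤ (d : WithBot ℕ)) :
    {x : F | f₁.eval x = f₂.eval x ∧
        (derivative f₁).eval x = (derivative f₂).eval x}.Finite ∧
    {x : F | f₁.eval x = f₂.eval x ∧
        (derivative f₁).eval x = (derivative f₂).eval x}.ncard ≤ d / 2 := by
  have hg : f₁ - f₂ ≠ 0 := sub_ne_zero.2 hne
  have hset : {x : F | f₁.eval x = f₂.eval x ∧
      (derivative f₁).eval x = (derivative f₂).eval x} =
      {x | (f₁ - f₂).IsRoot x ∧ (derivative (f₁ - f₂)).IsRoot x} := by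
    simp only [IsRoot.def, derivative_sub, eval_sub, sub_eq_zero]
  have hdeg : (f₁ - f₂).natDegree ≤ d :=
    natDegree_le_iff_degree_le.2 ((degree_sub_le _ _).trans (max_le hd₁ hd₂))
  rw [hset]
  refine ⟨finite_setOf_isRoot_and_isRoot_derivative hg, ?_⟩
  have := two_mul_ncard_setOf_isRoot_and_isRoot_derivative_le hg
  omega
end

section
/- Let m, w, δ be positive integers with δ ≤ w ≤ m. Let 𝓕 be a family of subsets of an m-element set, each of cardinality exactly w, such that any two distinct members A, B ∈ 𝓕 satisfy |A ∩ B| ≤ w − δ (equivalently, their indicator vectors have Hamming distance at least 2δ). Then |𝓕| · C(w, w − δ + 1) ≤ C(m, w − δ + 1). -/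
/-! Two distinct members share fewer than `k = w - δ + 1` points, so no `k`-subset lies in two
of them: the `C(w, k)` many `k`-subsets of each member are packed disjointly into the `C(m, k)`
many `k`-subsets of the ground set. -/

open Finset

namespace Finset

variable {α : Type*} [DecidableEq α]

theorem disjoint_powersetCard_of_card_inter_lt {k : ℕ} {A B : Finset α} (h : #(A ∩ B) < k) :
    Disjoint (A.powersetCard k) (B.powersetCard k) := by
  refine disjoint_left.2 fun S hSA hSB => ?_
  rw [mem_powersetCard] at hSA hSB
  have := card_le_card (subset_inter hSA.1 hSB.1)
  omega

theorem card_mul_choose_le_of_card_inter_lt [Fintype α] {𝓕 : Finset (Finset α)} {w k : ℕ}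
    (hcard : ∀ A ∈ 𝓕, #A = w)
    (hint : (𝓕 : Set (Finset α)).Pairwise fun A B => #(A ∩ B) < k) :
    #𝓕 * w.choose k ≤ (Fintype.card α).choose k :=
  calc #𝓕 * w.choose k = #(𝓕.biUnion (powersetCard k)) := by
        have hdisj : (𝓕 : Set (Finset α)).PairwiseDisjoint (powersetCard k) :=
          hint.mono' fun _ _ => disjoint_powersetCard_of_card_inter_lt
        rw [card_biUnion hdisj,
          sum_const_nat fun A hA => by rw [card_powersetCard, hcard A hA]]
    _ ≤ #((univ : Finset α).powersetCard k) :=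
        card_le_card (biUnion_subset.2 fun A _ => powersetCard_mono (subset_univ A))
    _ = (Fintype.card α).choose k := by rw [card_powersetCard, card_univ]

end Finset

theorem stmt_2_general (m w δ : ℕ)
    (𝓕 : Finset (Finset (Fin m)))
    (hcard : ∀ A ∈ 𝓕, A.card = w)
    (hint : ∀ A ∈ 𝓕, ∀ B ∈ 𝓕, A ≠ B → (A ∩ B).card ≤ w - δ) :
    𝓕.card * Nat.choose w (w - δ + 1) ≤ Nat.choose m (w - δ + 1) :=
  (card_mul_choose_le_of_card_inter_lt (k := w - δ + 1) hcard
    fun A hA B hB hAB => Nat.lt_succ_of_le (hint A hA B hB hAB)).trans_eq (by rw [Fintype.card_fin])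

theorem stmt_2 (m w δ : ℕ) (hδ : 0 < δ) (hw : 0 < w) (hm : 0 < m)
    (hδw : δ ≤ w) (hwm : w ≤ m)
    (𝓕 : Finset (Finset (Fin m)))
    (hcard : ∀ A ∈ 𝓕, A.card = w)
    (hint : ∀ A ∈ 𝓕, ∀ B ∈ 𝓕, A ≠ B → (A ∩ B).card ≤ w - δ) :
    𝓕.card * Nat.choose w (w - δ + 1) ≤ Nat.choose m (w - δ + 1) :=
  stmt_2_general m w δ 𝓕 hcard hint
end

section
/- Let F be a field and let k, b, e be integers with 0 ≤ b < k and 1 ≤ e ≤ 2(k − b) − 2. Let λ₁, …, λ_k be pairwise distinct elements of F and let α_j, β_j ∈ F for j ∈ {1, …, k}. Let L be the set of polynomials f ∈ F[X] of degree at most e such that the number of indices j ∈ {1, …, k} with f(λ_j) = α_j and f'(λ_j) = β_j is at least k − b. Then L is finite and |L| · C(k − b, ⌊e/2⌋ + 1) ≤ C(k, ⌊e/2⌋ + 1). -/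
/-!
Two distinct polynomials of degree at most `e` can agree to first order (value and derivative)
at no more than `e / 2` points, since their difference has a double root at each of them.
Hence a `(e / 2 + 1)`-subset of `Fin k` lies in the agreement set of at most one `f ∈ L`, while
every `f ∈ L` agrees at `≥ k - b` points and so contains `C(k - b, e / 2 + 1)` such subsets;
counting these subsets gives the bound, and finiteness follows since `f ↦ agreement set` is
injective on `L`.
-/

open Polynomial Finset

theorem Polynomial.eq_zero_of_natDegree_lt_two_mul_card_of_isRoot_derivative {R : Type*}
    [CommRing R] [IsDomain R] {p : R[X]} (s : Finset R)
    (hroot : ∀ a ∈ s, p.IsRoot a ∧ (derivative p).IsRoot a) (hcard : p.natDegree < 2 * #s) :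
    p = 0 := by
  classical
  by_contra hp
  have hdouble : 2 • s.val ≤ p.roots := by
    refine Multiset.le_iff_count.mpr fun a => ?_
    rw [Multiset.count_nsmul, count_roots]
    by_cases ha : a ∈ s
    · rw [Multiset.count_eq_one_of_mem s.nodup ha]
      exact (one_lt_rootMultiplicity_iff_isRoot hp).mpr (hroot a ha)
    · simp [Multiset.count_eq_zero_of_notMem ha]
  have := (Multiset.card_le_card hdouble).trans (card_roots' p)
  rw [Multiset.card_nsmul, card_val] at this
  omega

theorem Finset.card_mul_choose_le_of_card_inter_lt_s5 {α ι : Type*} [Fintype ι] [DecidableEq ι]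
    (L : Finset α) (S : α → Finset ι) {m t : ℕ} (hS : ∀ f ∈ L, m ≤ #(S f))
    (hinter : ∀ f ∈ L, ∀ g ∈ L, f ≠ g → #(S f ∩ S g) < t) :
    #L * m.choose t ≤ (Fintype.card ι).choose t := by
  have hdisj : (L : Set α).PairwiseDisjoint fun f => powersetCard t (S f) := by
    intro f hf g hg hfg
    refine disjoint_left.mpr fun A hAf hAg => ?_
    rw [mem_powersetCard] at hAf hAg
    have := card_le_card (subset_inter hAf.1 hAg.1)
    have := hinter f hf g hg hfg
    omega
  calc #L * m.choose t
      ≤ ∑ f ∈ L, #(powersetCard t (S f)) := by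
        rw [← smul_eq_mul]
        refine card_nsmul_le_sum L (fun f => #(powersetCard t (S f))) _ fun f hf => ?_
        rw [card_powersetCard]
        exact Nat.choose_le_choose t (hS f hf)
    _ = #(L.biUnion fun f => powersetCard t (S f)) := (card_biUnion hdisj).symm
    _ ≤ #(powersetCard t (univ : Finset ι)) :=
        card_le_card fun A hA => by
          obtain ⟨f, -, hA⟩ := mem_biUnion.mp hA
          exact powersetCard_mono (subset_univ _) hA
    _ = (Fintype.card ι).choose t := by rw [card_powersetCard, card_univ]

theorem Set.finite_and_ncard_mul_choose_le_of_card_inter_lt {α ι : Type*} [Fintype ι] [DecidableEq ι]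
    {L : Set α} (S : α → Finset ι) {m t : ℕ} (htm : t ≤ m) (hS : ∀ f ∈ L, m ≤ #(S f))
    (hinter : ∀ f ∈ L, ∀ g ∈ L, f ≠ g → #(S f ∩ S g) < t) :
    L.Finite ∧ L.ncard * m.choose t ≤ (Fintype.card ι).choose t := by
  have hinj : L.InjOn S := by
    intro f hf g hg hfg
    by_contra hne
    have := hinter f hf g hg hne
    rw [hfg, Finset.inter_self] at this
    have := hS g hg
    omega
  have hfin : L.Finite := Set.Finite.of_finite_image (Set.toFinite _) hinj
  refine ⟨hfin, ?_⟩
  rw [Set.ncard_eq_toFinset_card L hfin]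
  exact card_mul_choose_le_of_card_inter_lt_s5 _ S (by simpa using hS) (by simpa using hinter)

section FirstOrderAgreement

variable {F ι : Type*} [Field F] [Fintype ι] (lam α β : ι → F)

open Classical in
noncomputable def firstOrderAgreement (f : F[X]) : Finset ι :=
  {j | f.eval (lam j) = α j ∧ (derivative f).eval (lam j) = β j}

variable {lam α β}

theorem card_firstOrderAgreement_inter_le [DecidableEq ι] (hlam : Function.Injective lam)
    {f g : F[X]} {e : ℕ} (hf : f.natDegree ≤ e) (hg : g.natDegree ≤ e) (hfg : f ≠ g) :
    #(firstOrderAgreement lam α β f ∩ firstOrderAgreement lam α β g) ≤ e / 2 := by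
  classical
  by_contra! hcard
  refine sub_ne_zero.mpr hfg <| eq_zero_of_natDegree_lt_two_mul_card_of_isRoot_derivative
    ((firstOrderAgreement lam α β f ∩ firstOrderAgreement lam α β g).image lam) ?_ ?_
  · simp only [mem_image, mem_inter, firstOrderAgreement, mem_filter, mem_univ, true_and]
    rintro _ ⟨j, ⟨⟨hfj, hf'j⟩, ⟨hgj, hg'j⟩⟩, rfl⟩
    simp [hfj, hf'j, hgj, hg'j]
  · rw [card_image_of_injective _ hlam]
    have := natDegree_sub_le f g
    omega

end FirstOrderAgreement

theorem stmt_5_general {F : Type*} [Field F] (k b e : ℕ) (hbk : b < k)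
    (he2 : e ≤ 2 * (k - b) - 2)
    (lam : Fin k → F) (hinj : Function.Injective lam) (α β : Fin k → F) :
    {f : F[X] | f.natDegree ≤ e ∧
      k - b ≤ {j : Fin k | f.eval (lam j) = α j ∧
        (derivative f).eval (lam j) = β j}.ncard}.Finite ∧
    {f : F[X] | f.natDegree ≤ e ∧
      k - b ≤ {j : Fin k | f.eval (lam j) = α j ∧
        (derivative f).eval (lam j) = β j}.ncard}.ncard
      * Nat.choose (k - b) (e / 2 + 1) ≤ Nat.choose k (e / 2 + 1) := by
  classical
  have hncard (f : F[X]) : {j : Fin k | f.eval (lam j) = α j ∧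
      (derivative f).eval (lam j) = β j}.ncard = #(firstOrderAgreement lam α β f) := by
    rw [Set.ncard_eq_toFinset_card', Set.toFinset_ofPred, firstOrderAgreement]
  simp only [hncard]
  simpa only [Fintype.card_fin] using
    Set.finite_and_ncard_mul_choose_le_of_card_inter_lt (firstOrderAgreement lam α β)
      (by omega) (fun f hf => hf.2) fun f hf g hg hfg =>
        Nat.lt_succ_of_le (card_firstOrderAgreement_inter_le hinj hf.1 hg.1 hfg)

theorem stmt_5 {F : Type*} [Field F] (k b e : ℕ) (hb0 : 0 ≤ b) (hbk : b < k)
    (he1 : 1 ≤ e) (he2 : e ≤ 2 * (k - b) - 2)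
    (lam : Fin k → F) (hinj : Function.Injective lam) (α β : Fin k → F) :
    {f : F[X] | f.natDegree ≤ e ∧
      k - b ≤ {j : Fin k | f.eval (lam j) = α j ∧
        (derivative f).eval (lam j) = β j}.ncard}.Finite ∧
    {f : F[X] | f.natDegree ≤ e ∧
      k - b ≤ {j : Fin k | f.eval (lam j) = α j ∧
        (derivative f).eval (lam j) = β j}.ncard}.ncard
      * Nat.choose (k - b) (e / 2 + 1) ≤ Nat.choose k (e / 2 + 1) :=
  stmt_5_general k b e hbk he2 lam hinj α β
end

section
/- Let F be a field, let k ≥ 1 be an integer, and let (λ_j, α_j, β_j) ∈ F³ for j ∈ {1, …, k}. Let D, e be positive integers with 4·k·e ≤ (D + 1)², and set ρ = ⌊D/e⌋. Then there exist polynomials Q₀, Q₁, …, Q_ρ ∈ F[X], not all zero, with deg Q_s ≤ D − s·e for every s ∈ {0, …, ρ}, such that for every j ∈ {1, …, k}: (i) Σ_{s=0}^{ρ} Q_s(λ_j)·α_j^s = 0, and (ii) Σ_{s=1}^{ρ} s·Q_s(λ_j)·α_j^{s−1}·β_j + Σ_{s=0}^{ρ} Q_s'(λ_j)·α_j^s =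 0. -/
/-! The tuples `(Q₀, …, Q_ρ)` with `deg Q_s ≤ D - s e` form a vector space of dimension
`∑ₛ (D - s e + 1)`. Pairing `s` with `ρ - s` shows that twice this dimension is
`(ρ + 1)(D + D mod e + 2)`, and `e (ρ + 1) ≥ D + 1`, so the dimension exceeds
`(D + 1)² / (2e) ≥ 2k`. Conditions (i) and (ii) are `2k` linear equations in the tuple, hence
have a nonzero common solution. -/

open Polynomial

theorem sum_Icc_one_eq_sum_range_succ {M : Type*} [AddCommMonoid M] {f : ℕ → M} (n : ℕ)
    (hf : f 0 = 0) : ∑ s ∈ Finset.Icc 1 n, f s = ∑ s ∈ Finset.range (n + 1), f s := by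
  rw [Nat.range_succ_eq_Icc_zero, ← Finset.sum_Ioc_add_eq_sum_Icc (Nat.zero_le n), hf, add_zero,
    ← Finset.Icc_add_one_left_eq_Ioc, zero_add]

theorem two_mul_sum_range_sub_mul_add_one (D e : ℕ) :
    2 * ∑ s ∈ Finset.range (D / e + 1), (D - s * e + 1) = (D / e + 1) * (D + D % e + 2) := by
  set ρ := D / e
  have hD : e * ρ + D % e = D := Nat.div_add_mod D e
  have hpair : ∀ s ∈ Finset.range (ρ + 1),
      (D - s * e + 1) + (D - (ρ + 1 - 1 - s) * e + 1) = D + D % e + 2 := by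
    intro s hs
    have hsρ : s * e ≤ ρ * e :=
      Nat.mul_le_mul_right e (Nat.lt_succ_iff.mp (Finset.mem_range.mp hs))
    rw [Nat.add_sub_cancel, Nat.sub_mul, mul_comm e ρ] at *
    omega
  rw [two_mul]
  nth_rw 2 [← Finset.sum_range_reflect]
  rw [← Finset.sum_add_distrib, Finset.sum_congr rfl hpair, Finset.sum_const, Finset.card_range,
    smul_eq_mul]

theorem two_mul_lt_sum_range_sub_mul_add_one {k D e : ℕ} (he : 0 < e)
    (hcond : 4 * k * e ≤ (D + 1) ^ 2) :
    2 * k < ∑ s ∈ Finset.range (D / e + 1), (D - s * e + 1) := by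
  have hsum := two_mul_sum_range_sub_mul_add_one D e
  have hρ : D + 1 ≤ e * (D / e + 1) := Nat.lt_mul_div_succ D he
  refine Nat.lt_of_mul_lt_mul_left (a := 2 * e) ?_
  calc 2 * e * (2 * k) = 4 * k * e := by ring
    _ ≤ (D + 1) * (D + 1) := by rw [← sq]; exact hcond
    _ < (D + 1) * (D + D % e + 2) := Nat.mul_lt_mul_of_pos_left (by omega) (by omega)
    _ ≤ e * (D / e + 1) * (D + D % e + 2) := Nat.mul_le_mul_right _ hρ
    _ = 2 * e * ∑ s ∈ Finset.range (D / e + 1), (D - s * e + 1) := by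
      rw [mul_assoc, ← hsum]; ring

section

variable {F : Type*} [Field F] {n : ℕ}

/-- For `Q(X, Y) = ∑ₛ q s (X) * Y ^ s`, the value `Q(x, y)` and the derivative of
`t ↦ Q(x + t, y + z t)` at `t = 0`. -/
noncomputable def evalAndDirDeriv (x y z : F) : (Fin n → F[X]) →ₗ[F] F × F where
  toFun q := (∑ s : Fin n, (q s).eval x * y ^ (s : ℕ),
    ∑ s : Fin n, ((s : ℕ) : F) * (q s).eval x * y ^ ((s : ℕ) - 1) * z
      + ∑ s : Fin n, (derivative (q s)).eval x * y ^ (s : ℕ))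
  map_add' q r := by
    simp only [Pi.add_apply, eval_add, derivative_add, add_mul, mul_add, Finset.sum_add_distrib,
      Prod.mk_add_mk, add_add_add_comm]
  map_smul' c q := by
    simp only [Pi.smul_apply, eval_smul, derivative_smul, smul_eq_mul, Finset.mul_sum,
      RingHom.id_apply, Prod.smul_mk, mul_add]
    simp only [mul_assoc, mul_left_comm c]

theorem exists_ne_zero_mem_degreeLT_evalAndDirDeriv_eq_zero {k : ℕ} (d : Fin n → ℕ)
    (hd : 2 * k < ∑ s, d s) (x y z : Fin k → F) :
    ∃ q : Fin n → F[X], q ≠ 0 ∧ (∀ s, q s ∈ degreeLT F (d s)) ∧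
      ∀ j, evalAndDirDeriv (x j) (y j) (z j) q = 0 := by
  let T := (LinearMap.pi fun j => evalAndDirDeriv (x j) (y j) (z j)) ∘ₗ
    LinearMap.piMap fun s => (degreeLT F (d s)).subtype
  have hT : LinearMap.ker T ≠ ⊥ := LinearMap.ker_ne_bot_of_finrank_lt <| by
    simpa [Module.finrank_pi_fintype, Module.finrank_eq_card_basis (degreeLT.basis F _), mul_comm]
      using hd
  obtain ⟨v, hv, hv0⟩ := (Submodule.ne_bot_iff _).mp hT
  exact ⟨fun s => v s, fun h => hv0 (funext fun s => Subtype.ext (congrFun h s)),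
    fun s => (v s).2, fun j => congrFun hv j⟩

end

theorem stmt_7_general {F : Type*} [Field F] (k : ℕ)
    (lam α β : Fin k → F) (D e : ℕ) (he : 0 < e)
    (hcond : 4 * k * e ≤ (D + 1) ^ 2) :
    ∃ Q : ℕ → F[X],
      (∃ s ≤ D / e, Q s ≠ 0) ∧
      (∀ s ≤ D / e, (Q s).degree ≤ ((D - s * e : ℕ) : WithBot ℕ)) ∧
      (∀ j : Fin k,
        (∑ s ∈ Finset.range (D / e + 1), (Q s).eval (lam j) * α j ^ s = 0) ∧
        ((∑ s ∈ Finset.Icc 1 (D / e),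
            (s : F) * (Q s).eval (lam j) * α j ^ (s - 1) * β j)
          + ∑ s ∈ Finset.range (D / e + 1),
              (derivative (Q s)).eval (lam j) * α j ^ s = 0)) := by
  have hdim : 2 * k < ∑ s : Fin (D / e + 1), (D - s * e + 1) := by
    rw [← Finset.sum_range fun s => D - s * e + 1]
    exact two_mul_lt_sum_range_sub_mul_add_one he hcond
  obtain ⟨q, hq0, hq_deg, hq_eq⟩ :=
    exists_ne_zero_mem_degreeLT_evalAndDirDeriv_eq_zero _ hdim lam α β
  set Q : ℕ → F[X] := Function.extend Fin.val q 0
  have hQ (s : Fin (D / e + 1)) : Q s = q s := Fin.val_injective.extend_apply q 0 s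
  refine ⟨Q, ?_, fun s hs => ?_, fun j => ?_⟩
  · obtain ⟨s, hs⟩ := Function.ne_iff.mp hq0
    exact ⟨s, Nat.lt_succ_iff.mp s.2, by rwa [hQ]⟩
  · have hs_deg := hq_deg ⟨s, Nat.lt_succ_of_le hs⟩
    rwa [← hQ, degreeLT_succ_eq_degreeLE, mem_degreeLE] at hs_deg
  · have hj := hq_eq j
    simp only [evalAndDirDeriv, LinearMap.coe_mk, AddHom.coe_mk, Prod.mk_eq_zero] at hj
    rw [sum_Icc_one_eq_sum_range_succ _ (by simp), Finset.sum_range, Finset.sum_range,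
      Finset.sum_range]
    simpa only [hQ] using hj

theorem stmt_7 {F : Type*} [Field F] (k : ℕ) (hk : 1 ≤ k)
    (lam α β : Fin k → F) (D e : ℕ) (hD : 0 < D) (he : 0 < e)
    (hcond : 4 * k * e ≤ (D + 1) ^ 2) :
    ∃ Q : ℕ → F[X],
      (∃ s ≤ D / e, Q s ≠ 0) ∧
      (∀ s ≤ D / e, (Q s).degree ≤ ((D - s * e : ℕ) : WithBot ℕ)) ∧
      (∀ j : Fin k,
        (∑ s ∈ Finset.range (D / e + 1), (Q s).eval (lam j) * α j ^ s = 0) ∧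
        ((∑ s ∈ Finset.Icc 1 (D / e),
            (s : F) * (Q s).eval (lam j) * α j ^ (s - 1) * β j)
          + ∑ s ∈ Finset.range (D / e + 1),
              (derivative (Q s)).eval (lam j) * α j ^ s = 0)) :=
  stmt_7_general k lam α β D e he hcond
end

section
/- For all positive integers D and e, setting ρ = ⌊D/e⌋, the inequality 2·e·Σ_{s=0}^{ρ} (D − s·e + 1) ≥ (D + 1)² + 2·e holds. -/
open Finset

lemma sum_range_div_sub_mul_add_one (D e : ℕ) :
    ∑ s ∈ range (D / e + 1), (D - s * e + 1) =
      ∑ t ∈ range (D / e + 1), (t * e + (D % e + 1)) := by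
  rw [← sum_range_reflect]
  refine sum_congr rfl fun t ht => ?_
  have ht : t ≤ D / e := Nat.lt_succ_iff.mp (mem_range.mp ht)
  have hdiv : D = D / e * e + D % e := (Nat.div_add_mod' D e).symm
  have hsplit : (D / e - t) * e + t * e = D / e * e := by
    rw [← Nat.add_mul, Nat.sub_add_cancel ht]
  simp only [add_tsub_cancel_right]
  omega

lemma two_mul_sum_range_succ_mul_add (n e c : ℕ) :
    2 * ∑ t ∈ range (n + 1), (t * e + c) = e * n * (n + 1) + 2 * (n + 1) * c := by
  have gauss : (∑ t ∈ range (n + 1), t) * 2 = (n + 1) * n := by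
    rw [sum_range_id_mul_two, add_tsub_cancel_right]
  rw [sum_add_distrib, ← sum_mul, sum_const, card_range, smul_eq_mul]
  calc 2 * ((∑ t ∈ range (n + 1), t) * e + (n + 1) * c)
      = (∑ t ∈ range (n + 1), t) * 2 * e + 2 * (n + 1) * c := by ring
    _ = e * n * (n + 1) + 2 * (n + 1) * c := by rw [gauss]; ring

/-- With `x = r + 1 ∈ [1, e]`, the gap between the two sides is `e²ρ + x (2e - x) - 2e`; it is
nonnegative when `ρ ≥ 1`, and when `ρ = 0` the hypothesis `0 < r` forces `2 ≤ x ≤ e`. -/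
lemma sq_add_two_mul_le (ρ r e : ℕ) (hr : r < e) (hpos : 0 < e * ρ + r) :
    (e * ρ + r + 1) ^ 2 + 2 * e ≤ e * (e * ρ * (ρ + 1) + 2 * (ρ + 1) * (r + 1)) := by
  have hx : (r + 1) * (r + 1) ≤ e * (r + 1) := Nat.mul_le_mul_right _ hr
  have he_pos : 0 < e := Nat.zero_lt_of_lt hr
  rcases ρ with _ | ρ
  · have h2e : 2 * e ≤ (r + 1) * e := Nat.mul_le_mul_right e (by omega)
    nlinarith
  · have he : e ≤ e * (e * (ρ + 1)) := Nat.le_mul_of_pos_right e (by positivity)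
    have hex : e ≤ e * (r + 1) := Nat.le_mul_of_pos_right e (by omega)
    nlinarith

theorem stmt_8 (D e : ℕ) (hD : 0 < D) (he : 0 < e) :
    (D + 1) ^ 2 + 2 * e ≤
      2 * e * ∑ s ∈ Finset.range (D / e + 1), (D - s * e + 1) := by
  have hD' : D = e * (D / e) + D % e := (Nat.div_add_mod D e).symm
  calc (D + 1) ^ 2 + 2 * e = (e * (D / e) + D % e + 1) ^ 2 + 2 * e := by rw [← hD']
    _ ≤ e * (e * (D / e) * (D / e + 1) + 2 * (D / e + 1) * (D % e + 1)) :=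
        sq_add_two_mul_le _ _ _ (Nat.mod_lt D he) (hD' ▸ hD)
    _ = 2 * e * ∑ s ∈ range (D / e + 1), (D - s * e + 1) := by
        rw [sum_range_div_sub_mul_add_one, mul_comm 2 e, mul_assoc e 2,
          two_mul_sum_range_succ_mul_add]
end

section
/- Let F be a field and let k, b, e be integers with 0 ≤ b < k and e ≥ 1; set D = 2(k − b) − 1 and ρ = ⌊D/e⌋. Let λ₁, …, λ_k be pairwise distinct elements of F and let α_j, β_j ∈ F for j ∈ {1, …, k}. Suppose Q₀, …, Q_ρ ∈ F[X] satisfy deg Q_s ≤ D − s·e for every s, and for every j ∈ {1, …, k}: Σ_{s=0}^{ρ} Q_s(λ_j)·α_j^s = 0 and Σ_{s=1}^{ρ} s·Q_s(λ_j)·α_j^{s−1}·β_j + Σ_{s=0}^{ρ} Q_s'(λ_j)·α_j^s = 0. Let f ∈ F[X] have degree at most e, and suppose the number of indices j with f(λ_j) = α_j and f'(λ_j) = β_j is at least k − b. Then Σ_{s=0}^{ρ} Q_s · f^s is the zero polynomial of F[X]. -/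
/-!
The polynomial `P = ∑ s, Q s * f ^ s` has degree at most `D = 2 (k - b) - 1`. At every `λ_j` where
`f` agrees with `(α_j, β_j)`, the two interpolation conditions say exactly that `P` and `P'` vanish
there, so `P` has a double root at each of at least `k - b` distinct points. A nonzero `P` would
thus have degree at least `2 (k - b) > D`.
-/

open Polynomial

namespace Polynomial

open Finset

variable {R : Type*}

theorem degree_sum_mul_pow_le [Semiring R] {Q : ℕ → R[X]} {f : R[X]}
    {D e : ℕ} (hf : f.natDegree ≤ e)
    (hQ : ∀ s ≤ D / e, (Q s).degree ≤ ((D - s * e : ℕ) : WithBot ℕ)) :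
    (∑ s ∈ range (D / e + 1), Q s * f ^ s).degree ≤ D := by
  refine (degree_sum_le _ _).trans (Finset.sup_le fun s hs => ?_)
  have hs : s ≤ D / e := Nat.lt_succ_iff.mp (mem_range.mp hs)
  have hse : s * e ≤ D := (Nat.mul_le_mul_right e hs).trans (Nat.div_mul_le_self D e)
  have hfs : (f ^ s).degree ≤ ((s * e : ℕ) : WithBot ℕ) :=
    (degree_pow_le_of_le s (degree_le_of_natDegree_le hf)).trans (by norm_cast)
  calc (Q s * f ^ s).degree ≤ (Q s).degree + (f ^ s).degree := degree_mul_le _ _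
    _ ≤ ((D - s * e : ℕ) : WithBot ℕ) + ((s * e : ℕ) : WithBot ℕ) := add_le_add (hQ s hs) hfs
    _ = D := by rw [← Nat.cast_add, Nat.sub_add_cancel hse]

theorem eval_derivative_sum_mul_pow [CommSemiring R] (Q : ℕ → R[X])
    (f : R[X]) (n : ℕ) (x : R) :
    (derivative (∑ s ∈ range (n + 1), Q s * f ^ s)).eval x =
      (∑ s ∈ Icc 1 n, (s : R) * (Q s).eval x * f.eval x ^ (s - 1) * (derivative f).eval x)
        + ∑ s ∈ range (n + 1), (derivative (Q s)).eval x * f.eval x ^ s := by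
  have hrange : range (n + 1) = insert 0 (Icc 1 n) := by
    ext s; simp only [mem_range, mem_insert, mem_Icc]; omega
  simp only [derivative_sum, derivative_mul, derivative_pow, eval_finsetSum, eval_add, eval_mul,
    eval_pow, eval_C, sum_add_distrib]
  -- the `s = 0` term of the chain-rule sum vanishes
  rw [add_comm, hrange, sum_insert (by simp)]
  simp only [Nat.cast_zero, zero_mul, mul_zero, zero_add]
  exact congrArg₂ _ (sum_congr rfl fun s _ => by ring) rfl

theorem two_mul_card_le_natDegree [CommRing R] [IsDomain R] {p : R[X]} (hp : p ≠ 0) (S : Finset R)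
    (hS : ∀ a ∈ S, p.IsRoot a ∧ (derivative p).IsRoot a) :
    2 * S.card ≤ p.natDegree := by
  classical
  have hle : 2 • S.val ≤ p.roots := Multiset.le_iff_count.mpr fun a => by
    rw [Multiset.count_nsmul, count_roots]
    by_cases ha : a ∈ S
    · rw [Multiset.count_eq_one_of_mem S.nodup ha]
      exact (one_lt_rootMultiplicity_iff_isRoot hp).mpr (hS a ha)
    · simp [Multiset.count_eq_zero.mpr ha]
  calc 2 * S.card = Multiset.card (2 • S.val) := by simp
    _ ≤ Multiset.card p.roots := Multiset.card_le_card hle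
    _ ≤ p.natDegree := card_roots' p

end Polynomial

theorem stmt_11_general {F : Type*} [Field F] (k b e : ℕ) (hbk : b < k)
    (lam : Fin k → F) (hinj : Function.Injective lam) (α β : Fin k → F)
    (Q : ℕ → F[X])
    (hdeg : ∀ s ≤ (2 * (k - b) - 1) / e,
      (Q s).degree ≤ ((2 * (k - b) - 1 - s * e : ℕ) : WithBot ℕ))
    (hbase : ∀ j : Fin k,
      ∑ s ∈ Finset.range ((2 * (k - b) - 1) / e + 1),
        (Q s).eval (lam j) * α j ^ s = 0)
    (hext : ∀ j : Fin k,
      (∑ s ∈ Finset.Icc 1 ((2 * (k - b) - 1) / e),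
          (s : F) * (Q s).eval (lam j) * α j ^ (s - 1) * β j)
        + ∑ s ∈ Finset.range ((2 * (k - b) - 1) / e + 1),
            (derivative (Q s)).eval (lam j) * α j ^ s = 0)
    (f : F[X]) (hf : f.natDegree ≤ e)
    (hagree : k - b ≤ {j : Fin k | f.eval (lam j) = α j ∧
      (derivative f).eval (lam j) = β j}.ncard) :
    ∑ s ∈ Finset.range ((2 * (k - b) - 1) / e + 1), Q s * f ^ s = 0 := by
  classical
  set P := ∑ s ∈ Finset.range ((2 * (k - b) - 1) / e + 1), Q s * f ^ s
  by_contra hP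
  have hdegP : P.natDegree ≤ 2 * (k - b) - 1 :=
    natDegree_le_of_degree_le (degree_sum_mul_pow_le hf hdeg)
  set J := {j : Fin k | f.eval (lam j) = α j ∧ (derivative f).eval (lam j) = β j}.toFinset
  have hdouble : ∀ a ∈ J.image lam, P.IsRoot a ∧ (derivative P).IsRoot a := by
    simp only [Finset.mem_image, Set.mem_toFinset, Set.mem_ofPred_eq, J]
    rintro _ ⟨j, ⟨hα, hβ⟩, rfl⟩
    refine ⟨?_, ?_⟩
    · simpa only [IsRoot, P, eval_finsetSum, eval_mul, eval_pow, hα] using hbase j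
    · simpa only [IsRoot, P, eval_derivative_sum_mul_pow, hα, hβ] using hext j
  have hcard := two_mul_card_le_natDegree hP _ hdouble
  rw [Finset.card_image_of_injective _ hinj, ← Set.ncard_eq_toFinset_card'] at hcard
  omega

theorem stmt_11 {F : Type*} [Field F] (k b e : ℕ) (hb0 : 0 ≤ b) (hbk : b < k)
    (he : 1 ≤ e)
    (lam : Fin k → F) (hinj : Function.Injective lam) (α β : Fin k → F)
    (Q : ℕ → F[X])
    (hdeg : ∀ s ≤ (2 * (k - b) - 1) / e,
      (Q s).degree ≤ ((2 * (k - b) - 1 - s * e : ℕ) : WithBot ℕ))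
    (hbase : ∀ j : Fin k,
      ∑ s ∈ Finset.range ((2 * (k - b) - 1) / e + 1),
        (Q s).eval (lam j) * α j ^ s = 0)
    (hext : ∀ j : Fin k,
      (∑ s ∈ Finset.Icc 1 ((2 * (k - b) - 1) / e),
          (s : F) * (Q s).eval (lam j) * α j ^ (s - 1) * β j)
        + ∑ s ∈ Finset.range ((2 * (k - b) - 1) / e + 1),
            (derivative (Q s)).eval (lam j) * α j ^ s = 0)
    (f : F[X]) (hf : f.natDegree ≤ e)
    (hagree : k - b ≤ {j : Fin k | f.eval (lam j) = α j ∧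
      (derivative f).eval (lam j) = β j}.ncard) :
    ∑ s ∈ Finset.range ((2 * (k - b) - 1) / e + 1), Q s * f ^ s = 0 :=
  stmt_11_general k b e hbk lam hinj α β Q hdeg hbase hext f hf hagree
end

section
/- Let F be a field and let k, b, e be integers with 0 ≤ b < k, e ≥ 1, and k·e ≤ (k − b)². Let λ₁, …, λ_k be pairwise distinct elements of F and let α_j, β_j ∈ F for j ∈ {1, …, k}. Then the set of polynomials f ∈ F[X] of degree at most e such that the number of indices j ∈ {1, …, k} with f(λ_j) = α_j and f'(λ_j) = β_j is at least k − b is finite and has at most ⌊(2(k − b) − 1)/e⌋ elements. -/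
/-!
Two distinct polynomials of degree at most `e` whose order-1 codewords both agree with the
received word at a point `λⱼ` differ by a polynomial with a double root at `λⱼ`, so they agree
simultaneously on at most `e / 2` positions. A Johnson-type double count then bounds the number
of codewords with `k - b` agreements: taking the least `m` with `m * e ≥ 2 (k - b)`, any `m` such
codewords would violate `k * e ≤ (k - b) ^ 2`.
-/

open Polynomial Finset

namespace Polynomial

variable {R : Type*} [CommRing R]

theorem two_mul_card_le_natDegree_of_isRoot_derivative [IsDomain R] {p : R[X]} (hp : p ≠ 0) (s : Finset R)
    (hs : ∀ x ∈ s, p.IsRoot x ∧ (derivative p).IsRoot x) : 2 * #s ≤ p.natDegree := by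
  classical
  have hle : 2 • s.val ≤ p.roots := by
    refine Multiset.le_iff_count.mpr fun x => ?_
    rw [Multiset.count_nsmul, count_roots]
    by_cases hx : x ∈ s
    · rw [Multiset.count_eq_one_of_mem s.nodup hx]
      exact (one_lt_rootMultiplicity_iff_isRoot hp).mpr (hs x hx)
    · simp [Multiset.count_eq_zero.mpr hx]
  calc 2 * #s = Multiset.card (2 • s.val) := (Multiset.card_nsmul _ _).symm
    _ ≤ Multiset.card p.roots := Multiset.card_le_card hle
    _ ≤ p.natDegree := p.card_roots'

variable {ι : Type*} [Fintype ι] [DecidableEq R]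

noncomputable def agreement (x α β : ι → R) (f : R[X]) : Finset ι :=
  {j | f.eval (x j) = α j ∧ (derivative f).eval (x j) = β j}

theorem ncard_setOf_eq_card_agreement (x α β : ι → R) (f : R[X]) :
    {j | f.eval (x j) = α j ∧ (derivative f).eval (x j) = β j}.ncard
      = #(agreement x α β f) := by
  rw [agreement, ← Set.ncard_coe_finset, coe_filter_univ]

theorem two_mul_card_agreement_inter_le [IsDomain R] [DecidableEq ι] {x : ι → R} (hx : Function.Injective x) (α β : ι → R)
    {f g : R[X]} (hfg : f ≠ g) {e : ℕ} (hf : f.natDegree ≤ e) (hg : g.natDegree ≤ e) :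
    2 * #(agreement x α β f ∩ agreement x α β g) ≤ e := by
  have hroots : ∀ y ∈ (agreement x α β f ∩ agreement x α β g).image x,
      (f - g).IsRoot y ∧ (derivative (f - g)).IsRoot y := by
    simp only [mem_image, mem_inter, agreement, mem_filter, mem_univ, true_and]
    rintro _ ⟨j, ⟨⟨hf0, hf1⟩, hg0, hg1⟩, rfl⟩
    simp [derivative_sub, hf0, hf1, hg0, hg1]
  calc 2 * #(agreement x α β f ∩ agreement x α β g)
      = 2 * #((agreement x α β f ∩ agreement x α β g).image x) := by
        rw [card_image_of_injective _ hx]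
    _ ≤ (f - g).natDegree :=
        two_mul_card_le_natDegree_of_isRoot_derivative (sub_ne_zero.mpr hfg) _ hroots
    _ ≤ e := (natDegree_sub_le f g).trans (max_le hf hg)

end Polynomial

theorem Set.finite_and_ncard_le_of_forall_finset_card_le {α : Type*} {s : Set α} {n : ℕ}
    (h : ∀ t : Finset α, ↑t ⊆ s → #t ≤ n) : s.Finite ∧ s.ncard ≤ n := by
  obtain hs | hs := s.finite_or_infinite
  · lift s to Finset α using hs
    exact ⟨s.finite_toSet, by simpa using h s subset_rfl⟩
  · obtain ⟨t, hts, ht⟩ := hs.exists_subset_card_eq (n + 1)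
    have := h t hts
    omega

namespace Finset

theorem two_mul_card_le_two_add_card_offDiag {α : Type*} [DecidableEq α] (s : Finset α) :
    2 * #s ≤ 2 + #s.offDiag := by
  rw [offDiag_card, ← Nat.mul_sub_one]
  rcases #s with _ | _ | d
  · simp
  · simp
  · simp only [Nat.add_sub_cancel]
    nlinarith

variable {α ι : Type*} [DecidableEq α] [Fintype ι] [DecidableEq ι]

/-- Counting, for each position `x`, the members of `T` containing `x`: a position in `d` of the
sets contributes `d` to the left side and `d (d - 1)` ordered pairs to the right. -/
theorem two_mul_sum_card_le (A : α → Finset ι) (T : Finset α) :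
    2 * ∑ f ∈ T, #(A f) ≤ 2 * Fintype.card ι + ∑ p ∈ T.offDiag, #(A p.1 ∩ A p.2) := by
  set d : ι → Finset α := fun x => {f ∈ T | x ∈ A f}
  have hA : ∑ f ∈ T, #(A f) = ∑ x, #(d x) := by
    simpa [bipartiteAbove, bipartiteBelow] using
      sum_card_bipartiteAbove_eq_sum_card_bipartiteBelow (fun f x => x ∈ A f) (s := T) (t := univ)
  have hinter : ∑ p ∈ T.offDiag, #(A p.1 ∩ A p.2) = ∑ x, #(d x).offDiag := by
    convert sum_card_bipartiteAbove_eq_sum_card_bipartiteBelow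
      (fun p x => x ∈ A p.1 ∧ x ∈ A p.2) (s := T.offDiag) (t := univ) using 3 with p _ x
    · ext
      simp [bipartiteAbove]
    · ext
      simp only [mem_offDiag, mem_filter, bipartiteBelow, d]
      tauto
  calc 2 * ∑ f ∈ T, #(A f) = ∑ x, 2 * #(d x) := by rw [hA, mul_sum]
    _ ≤ ∑ x, (2 + #(d x).offDiag) :=
        sum_le_sum fun x _ => (d x).two_mul_card_le_two_add_card_offDiag
    _ = _ := by rw [sum_add_distrib, sum_const, card_univ, smul_eq_mul, mul_comm, hinter]

theorem card_mul_lt_of_two_mul_card_inter_le (A : α → Finset ι) (T : Finset α) {t e : ℕ}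
    (ht : 0 < t) (hι : Fintype.card ι * e ≤ t ^ 2) (hA : ∀ f ∈ T, t ≤ #(A f))
    (hpair : ∀ f ∈ T, ∀ g ∈ T, f ≠ g → 2 * #(A f ∩ A g) ≤ e) : #T * e < 2 * t := by
  by_contra! hT
  have hex : ∃ m, 2 * t ≤ m * e := ⟨_, hT⟩
  obtain ⟨m, hm⟩ : ∃ m, Nat.find hex = m + 1 :=
    Nat.exists_eq_add_one.mpr (Nat.find_pos hex |>.mpr (by rw [zero_mul]; omega))
  have hcover : 2 * t ≤ (m + 1) * e := hm ▸ Nat.find_spec hex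
  have hminimal : m * e < 2 * t := not_le.mp (Nat.find_min hex (by omega))
  obtain ⟨S, hST, hS⟩ := exists_subset_card_eq (hm ▸ Nat.find_min' hex hT)
  have hlow : (m + 1) * t ≤ ∑ f ∈ S, #(A f) := by
    simpa [hS] using card_nsmul_le_sum S (fun f => #(A f)) t fun f hf => hA f (hST hf)
  have hup : 2 * ∑ p ∈ S.offDiag, #(A p.1 ∩ A p.2) ≤ (m + 1) * m * e := by
    rw [mul_sum]
    calc ∑ p ∈ S.offDiag, 2 * #(A p.1 ∩ A p.2) ≤ ∑ _p ∈ S.offDiag, e :=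
          sum_le_sum fun p hp => by
            obtain ⟨hp1, hp2, hne⟩ := mem_offDiag.mp hp
            exact hpair _ (hST hp1) _ (hST hp2) hne
      _ = (m + 1) * m * e := by
          rw [sum_const, smul_eq_mul, offDiag_card, hS, ← Nat.mul_sub_one, Nat.add_sub_cancel]
  have hcount := two_mul_sum_card_le A S
  -- `(m + 1) m e ≤ (m + 1) (2 t - 1)` by minimality of `m + 1`
  have hk : 2 * (m + 1) * t + (m + 1) ≤ 4 * Fintype.card ι := by nlinarith
  have hke := Nat.mul_le_mul_right e hk
  -- `4 t ^ 2 ≤ 2 t (m + 1) e` leaves no room for the extra `(m + 1) e > 0`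
  nlinarith

end Finset

theorem stmt_13_general {F : Type*} [Field F] (k b e : ℕ) (hbk : b < k)
    (he : 1 ≤ e) (hke : k * e ≤ (k - b) ^ 2)
    (lam : Fin k → F) (hinj : Function.Injective lam) (α β : Fin k → F) :
    {f : F[X] | f.natDegree ≤ e ∧
      k - b ≤ {j : Fin k | f.eval (lam j) = α j ∧
        (derivative f).eval (lam j) = β j}.ncard}.Finite ∧
    {f : F[X] | f.natDegree ≤ e ∧
      k - b ≤ {j : Fin k | f.eval (lam j) = α j ∧
        (derivative f).eval (lam j) = β j}.ncard}.ncard ≤ (2 * (k - b) - 1) / e := by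
  classical
  refine Set.finite_and_ncard_le_of_forall_finset_card_le fun T hT => ?_
  have hagree : ∀ f ∈ T, k - b ≤ #(agreement lam α β f) := fun f hf =>
    ncard_setOf_eq_card_agreement lam α β f ▸ (hT hf).2
  have hT_lt : #T * e < 2 * (k - b) :=
    card_mul_lt_of_two_mul_card_inter_le (agreement lam α β) T (by omega) (by simpa using hke)
      hagree fun f hf g hg hfg => two_mul_card_agreement_inter_le hinj α β hfg (hT hf).1 (hT hg).1
  rw [Nat.le_div_iff_mul_le he]
  omega

theorem stmt_13 {F : Type*} [Field F] (k b e : ℕ) (hb0 : 0 ≤ b) (hbk : b < k)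
    (he : 1 ≤ e) (hke : k * e ≤ (k - b) ^ 2)
    (lam : Fin k → F) (hinj : Function.Injective lam) (α β : Fin k → F) :
    {f : F[X] | f.natDegree ≤ e ∧
      k - b ≤ {j : Fin k | f.eval (lam j) = α j ∧
        (derivative f).eval (lam j) = β j}.ncard}.Finite ∧
    {f : F[X] | f.natDegree ≤ e ∧
      k - b ≤ {j : Fin k | f.eval (lam j) = α j ∧
        (derivative f).eval (lam j) = β j}.ncard}.ncard ≤ (2 * (k - b) - 1) / e :=
  stmt_13_general k b e hbk he hke lam hinj α β
end
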